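/- arXiv:1611.08047 — 7 statements merged into one kernel-verified Lean document; each statement's English description precedes it below -/
import Mathlib

section
/- If F and G are invertible linear operators on a finite-dimensional complex vector space V such that the operator R = F ⊗ G on V ⊗ V satisfies the Yang-Baxter equation (R ⊗ I)(I ⊗ R)(R ⊗ I) = (I ⊗ R)(R ⊗ I)(I ⊗ R), then there exist nonzero scalars x, t ∈ ℂ with F = x·I and G = t·I, hence R is a scalar multiple of the identity. -/
/-!
Writing `R₁₂ = R ⊗ I` and `R₂₃ = I ⊗ R` with `R = F ⊗ G` and reassociating `V ⊗ V ⊗ V`, the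
braid relation becomes `F² ⊗ GFG ⊗ G = F ⊗ FGF ⊗ G²`. Equal Kronecker products of nonzero factors
have proportional factors, so `F² ∈ ℂ F` and `G² ∈ ℂ G`; cancelling the invertible `F`, resp. `G`,
shows both are nonzero multiples of the identity.
-/

open Matrix Kronecker

theorem IsUnit.eq_smul_one_of_mul_self_eq_smul {K A : Type*} [CommSemiring K] [Semiring A]
    [Nontrivial A] [Algebra K A] {X : A} (hX : IsUnit X) {s : K} (h : X * X = s • X) :
    s ≠ 0 ∧ X = s • 1 := by
  have hXs : X = s • 1 := hX.mul_left_inj.mp (by rw [h, smul_one_mul])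
  refine ⟨fun hs => hX.ne_zero ?_, hXs⟩
  rw [hXs, hs, zero_smul]

namespace Matrix

section Kronecker

variable {K l m n p : Type*} [Field K] {A C : Matrix l m K} {B D : Matrix n p K}

theorem exists_eq_smul_of_kronecker_eq_kronecker_left (h : A ⊗ₖ B = C ⊗ₖ D) (hB : B ≠ 0) :
    ∃ c : K, A = c • C := by
  obtain ⟨k, k', hk⟩ : ∃ k k', B k k' ≠ 0 := by
    by_contra! hB0
    exact hB (ext hB0)
  refine ⟨D k k' / B k k', ext fun i j => ?_⟩
  have hij := congr_fun₂ h (i, k) (j, k')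
  rw [kronecker_apply, kronecker_apply] at hij
  rw [smul_apply, smul_eq_mul, div_mul_eq_mul_div, eq_div_iff hk]
  linear_combination hij

theorem exists_eq_smul_of_kronecker_eq_kronecker_right (h : A ⊗ₖ B = C ⊗ₖ D) (hC : C ≠ 0) :
    ∃ c : K, D = c • B := by
  obtain ⟨i, i', hi⟩ : ∃ i i', C i i' ≠ 0 := by
    by_contra! hC0
    exact hC (ext hC0)
  refine ⟨A i i' / C i i', ext fun k k' => ?_⟩
  have hkk' := congr_fun₂ h (i, k) (i', k')
  rw [kronecker_apply, kronecker_apply] at hkk'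
  rw [smul_apply, smul_eq_mul, div_mul_eq_mul_div, eq_div_iff hi]
  linear_combination -hkk'

end Kronecker

section YangBaxter

variable {α ι : Type*} [CommSemiring α] [DecidableEq ι]

/-- `R ⊗ I` acting on `V ⊗ (V ⊗ V)`. -/
abbrev kroneckerOneAssoc (R : Matrix (ι × ι) (ι × ι) α) : Matrix (ι × ι × ι) (ι × ι × ι) α :=
  reindex (Equiv.prodAssoc ι ι ι) (Equiv.prodAssoc ι ι ι) (R ⊗ₖ 1)

theorem kroneckerOneAssoc_apply (R : Matrix (ι × ι) (ι × ι) α) (p q : ι × ι × ι) :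
    kroneckerOneAssoc R p q = R (p.1, p.2.1) (q.1, q.2.1) * if p.2.2 = q.2.2 then 1 else 0 := by
  simp [one_apply]

theorem one_kronecker_apply (R : Matrix (ι × ι) (ι × ι) α) (p q : ι × ι × ι) :
    ((1 : Matrix ι ι α) ⊗ₖ R) p q = (if p.1 = q.1 then 1 else 0) * R p.2 q.2 := by
  simp [one_apply]

theorem braid_kronecker_iff [Fintype ι] (F G : Matrix ι ι α) :
    kroneckerOneAssoc (F ⊗ₖ G) * (1 ⊗ₖ (F ⊗ₖ G)) * kroneckerOneAssoc (F ⊗ₖ G) =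
        (1 ⊗ₖ (F ⊗ₖ G)) * kroneckerOneAssoc (F ⊗ₖ G) * (1 ⊗ₖ (F ⊗ₖ G)) ↔
      (F * F) ⊗ₖ (G * F * G) ⊗ₖ G = F ⊗ₖ (F * G * F) ⊗ₖ (G * G) := by
  let ρ := reindexRingEquiv α (Equiv.prodAssoc ι ι ι)
  have h23 : (1 : Matrix ι ι α) ⊗ₖ (F ⊗ₖ G) = ρ (1 ⊗ₖ F ⊗ₖ G) := (kronecker_assoc _ _ _).symm
  have h12 : kroneckerOneAssoc (F ⊗ₖ G) = ρ (F ⊗ₖ G ⊗ₖ 1) := rfl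
  rw [h23, h12, ← map_mul, ← map_mul, ← map_mul, ← map_mul, ρ.injective.eq_iff]
  simp only [← mul_kronecker_mul, mul_one, one_mul]

end YangBaxter

end Matrix

/-- If R = F ⊗ G satisfies the Yang-Baxter (braid) equation on V ⊗ V ⊗ V with
F, G invertible, then F and G are nonzero scalar multiples of the identity. -/
theorem product_yang_baxter_implies_scalar (n : ℕ)
    (F G : Matrix (Fin n) (Fin n) ℂ) (hF : IsUnit F) (hG : IsUnit G)
    (R : Matrix (Fin n × Fin n) (Fin n × Fin n) ℂ) (hR : R = F ⊗ₖ G)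
    (R12 R23 : Matrix (Fin n × Fin n × Fin n) (Fin n × Fin n × Fin n) ℂ)
    (hR12 : ∀ p q, R12 p q = R (p.1, p.2.1) (q.1, q.2.1) * (if p.2.2 = q.2.2 then 1 else 0))
    (hR23 : ∀ p q, R23 p q = (if p.1 = q.1 then 1 else 0) * R p.2 q.2)
    (hYB : R12 * R23 * R12 = R23 * R12 * R23) :
    ∃ x t : ℂ, x ≠ 0 ∧ t ≠ 0 ∧ F = x • (1 : Matrix (Fin n) (Fin n) ℂ) ∧
      G = t • (1 : Matrix (Fin n) (Fin n) ℂ) := by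
  cases isEmpty_or_nonempty (Fin n)
  · exact ⟨1, 1, one_ne_zero, one_ne_zero, Subsingleton.elim _ _, Subsingleton.elim _ _⟩
  have h12 : R12 = kroneckerOneAssoc R := ext fun p q => by rw [hR12, kroneckerOneAssoc_apply]
  have h23 : R23 = 1 ⊗ₖ R := ext fun p q => by rw [hR23, one_kronecker_apply]
  rw [h12, h23, hR, braid_kronecker_iff] at hYB
  obtain ⟨c, hc⟩ := exists_eq_smul_of_kronecker_eq_kronecker_left hYB hG.ne_zero
  rw [← kronecker_smul] at hc
  obtain ⟨x, hx⟩ :=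
    exists_eq_smul_of_kronecker_eq_kronecker_left hc ((hG.mul hF).mul hG).ne_zero
  obtain ⟨t, ht⟩ := exists_eq_smul_of_kronecker_eq_kronecker_right hYB
    (hF.kronecker ((hF.mul hG).mul hF)).ne_zero
  obtain ⟨hx0, hFx⟩ := hF.eq_smul_one_of_mul_self_eq_smul hx
  obtain ⟨ht0, hGt⟩ := hG.eq_smul_one_of_mul_self_eq_smul ht
  exact ⟨x, t, hx0, ht0, hFx, hGt⟩
end

section
/- Let S : V ⊗ V → V ⊗ V be the swap operator S(x ⊗ y) = y ⊗ x, and let F, G be invertible operators on V. If R = S ∘ (F ⊗ G) satisfies the Yang-Baxter equation (R ⊗ I)(I ⊗ R)(R ⊗ I) = (I ⊗ R)(R ⊗ I)(I ⊗ R) on V ⊗ V ⊗ V, then FG = GF. -/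
/-!
Entrywise, `R (a, b) (c, d) = F b c * G a d`, and both sides of the Yang–Baxter equation
factor: their `(a, b, c), (d, e, f)` entries are `(F * G) b e * (F * F) c d * (G * G) a f` and
`(G * F) b e * (F * F) c d * (G * G) a f`. As `F * F` and `G * G` are invertible, hence nonzero,
some factor `(F * F) c d * (G * G) a f` is nonzero and can be cancelled.
-/

open Matrix Kronecker

namespace Matrix

variable {ι α : Type*}

theorem exists_apply_ne_zero_of_ne_zero {m n : Type*} [Zero α] {M : Matrix m n α} (hM : M ≠ 0) :
    ∃ i j, M i j ≠ 0 := by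
  by_contra! h
  exact hM (ext h)

variable [Fintype ι] [DecidableEq ι]

theorem swap_mul_kronecker_apply [NonAssocSemiring α] {S : Matrix (ι × ι) (ι × ι) α}
    (hS : ∀ p q, S p q = if p.1 = q.2 ∧ p.2 = q.1 then 1 else 0) (F G : Matrix ι ι α)
    (a b c d : ι) : (S * (F ⊗ₖ G)) (a, b) (c, d) = F b c * G a d := by
  simp [mul_apply, Fintype.sum_prod_type, hS, ite_and]

variable [CommSemiring α] {F G : Matrix ι ι α} {R12 R23 : Matrix (ι × ι × ι) (ι × ι × ι) α}

theorem r12_mul_r23_apply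
    (h12 : ∀ a b c d e f, R12 (a, b, c) (d, e, f) = F b d * G a e * if c = f then 1 else 0)
    (h23 : ∀ a b c d e f, R23 (a, b, c) (d, e, f) = (if a = d then 1 else 0) * (F c e * G b f))
    (a b c d e f : ι) : (R12 * R23) (a, b, c) (d, e, f) = F b d * F c e * (G * G) a f := by
  simp only [mul_apply, h12, h23, mul_ite, ite_mul, mul_one, one_mul, mul_zero, zero_mul,
    Fintype.sum_prod_type, Finset.sum_ite_irrel, Finset.sum_ite_eq, Finset.sum_ite_eq',
    Finset.mem_univ, ↓reduceIte, Finset.sum_const_zero, Finset.mul_sum]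
  exact Finset.sum_congr rfl fun _ _ => by ring

theorem r23_mul_r12_apply
    (h12 : ∀ a b c d e f, R12 (a, b, c) (d, e, f) = F b d * G a e * if c = f then 1 else 0)
    (h23 : ∀ a b c d e f, R23 (a, b, c) (d, e, f) = (if a = d then 1 else 0) * (F c e * G b f))
    (a b c d e f : ι) : (R23 * R12) (a, b, c) (d, e, f) = (F * F) c d * G a e * G b f := by
  simp only [mul_apply, h12, h23, mul_ite, ite_mul, mul_one, one_mul, mul_zero, zero_mul,
    Fintype.sum_prod_type, Finset.sum_ite_irrel, Finset.sum_ite_eq, Finset.sum_ite_eq',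
    Finset.mem_univ, ↓reduceIte, Finset.sum_const_zero, Finset.sum_mul]
  exact Finset.sum_congr rfl fun _ _ => by ring

theorem r12_mul_r23_mul_r12_apply
    (h12 : ∀ a b c d e f, R12 (a, b, c) (d, e, f) = F b d * G a e * if c = f then 1 else 0)
    (h23 : ∀ a b c d e f, R23 (a, b, c) (d, e, f) = (if a = d then 1 else 0) * (F c e * G b f))
    (a b c d e f : ι) :
    (R12 * R23 * R12) (a, b, c) (d, e, f) = (F * G) b e * (F * F) c d * (G * G) a f := by
  simp only [mul_apply (M := R12 * R23), r12_mul_r23_apply h12 h23, h12, mul_ite, mul_one,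
    mul_zero, Fintype.sum_prod_type, Finset.sum_ite_eq', Finset.mem_univ, ↓reduceIte]
  rw [mul_apply (M := F) (N := G), mul_apply (M := F) (N := F), Finset.sum_mul_sum,
    Finset.sum_mul]
  refine Finset.sum_congr rfl fun _ _ => ?_
  rw [Finset.sum_mul]
  exact Finset.sum_congr rfl fun _ _ => by ring

theorem r23_mul_r12_mul_r23_apply
    (h12 : ∀ a b c d e f, R12 (a, b, c) (d, e, f) = F b d * G a e * if c = f then 1 else 0)
    (h23 : ∀ a b c d e f, R23 (a, b, c) (d, e, f) = (if a = d then 1 else 0) * (F c e * G b f))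
    (a b c d e f : ι) :
    (R23 * R12 * R23) (a, b, c) (d, e, f) = (G * F) b e * (F * F) c d * (G * G) a f := by
  simp only [mul_apply (M := R23 * R12), r23_mul_r12_apply h12 h23, h23, ite_mul, one_mul,
    zero_mul, mul_ite, mul_zero, Fintype.sum_prod_type, Finset.sum_ite_irrel,
    Finset.sum_const_zero, Finset.sum_ite_eq', Finset.mem_univ, ↓reduceIte]
  rw [mul_right_comm, mul_comm ((G * F) b e), mul_apply (M := G) (N := G),
    mul_apply (M := G) (N := F), Finset.sum_mul_sum, Finset.sum_mul]
  refine Finset.sum_congr rfl fun _ _ => ?_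
  rw [Finset.sum_mul]
  exact Finset.sum_congr rfl fun _ _ => by ring

end Matrix

/-- If R = S ∘ (F ⊗ G) (swap composed with a product operator) satisfies the
Yang-Baxter equation, then FG = GF. -/
theorem swap_yang_baxter_implies_commute (n : ℕ)
    (F G : Matrix (Fin n) (Fin n) ℂ) (hF : IsUnit F) (hG : IsUnit G)
    (S : Matrix (Fin n × Fin n) (Fin n × Fin n) ℂ)
    (hS : ∀ p q, S p q = if p.1 = q.2 ∧ p.2 = q.1 then 1 else 0)
    (R : Matrix (Fin n × Fin n) (Fin n × Fin n) ℂ) (hR : R = S * (F ⊗ₖ G))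
    (R12 R23 : Matrix (Fin n × Fin n × Fin n) (Fin n × Fin n × Fin n) ℂ)
    (hR12 : ∀ p q, R12 p q = R (p.1, p.2.1) (q.1, q.2.1) * (if p.2.2 = q.2.2 then 1 else 0))
    (hR23 : ∀ p q, R23 p q = (if p.1 = q.1 then 1 else 0) * R p.2 q.2)
    (hYB : R12 * R23 * R12 = R23 * R12 * R23) :
    F * G = G * F := by
  rcases isEmpty_or_nonempty (Fin n) with hn | hn
  · exact Subsingleton.elim _ _
  have h12 : ∀ a b c d e f, R12 (a, b, c) (d, e, f) = F b d * G a e * if c = f then 1 else 0 :=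
    fun _ _ _ _ _ _ => by rw [hR12, hR, swap_mul_kronecker_apply hS]
  have h23 : ∀ a b c d e f, R23 (a, b, c) (d, e, f) = (if a = d then 1 else 0) * (F c e * G b f) :=
    fun _ _ _ _ _ _ => by rw [hR23, hR, swap_mul_kronecker_apply hS]
  obtain ⟨c, d, hcd⟩ := exists_apply_ne_zero_of_ne_zero (hF.mul hF).ne_zero
  obtain ⟨a, f, haf⟩ := exists_apply_ne_zero_of_ne_zero (hG.mul hG).ne_zero
  ext b e
  have hentry := congrFun₂ hYB (a, b, c) (d, e, f)
  rw [r12_mul_r23_mul_r12_apply h12 h23, r23_mul_r12_mul_r23_apply h12 h23, mul_assoc,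
    mul_assoc] at hentry
  exact mul_right_cancel₀ (mul_ne_zero hcd haf) hentry
end

section
/- The 4×4 matrix R with rows [A⁻¹,0,0,0], [0, A⁻¹ − A³, A, 0], [0, A, 0, 0], [0,0,0, A⁻¹] (A ∈ ℂ, A ≠ 0) is unitary if and only if A⁴ = 1 and |A| = 1; in that case A = ±1 or A = ±i. -/
/-!
Unitarity of `R` is read off entrywise: the diagonal entries force `|A| = 1`, and the `(1,2)` entry
`(A⁻¹ - A³) · conj A` then forces `A⁻¹ = A³`, i.e. `A⁴ = 1`. Conversely, these two conditions turn
`R` into a permutation matrix with unimodular entries.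
-/

open Matrix ComplexConjugate

theorem inv_eq_pow_iff_pow_succ_eq_one {G₀ : Type*} [GroupWithZero G₀] {a : G₀} (ha : a ≠ 0)
    (n : ℕ) : a⁻¹ = a ^ n ↔ a ^ (n + 1) = 1 := by
  rw [eq_comm, pow_succ, mul_eq_one_iff_eq_inv₀ ha]

theorem Complex.eq_one_or_neg_one_or_I_or_neg_I_of_pow_four_eq_one {z : ℂ} (h : z ^ 4 = 1) :
    z = 1 ∨ z = -1 ∨ z = I ∨ z = -I := by
  have hfactor : (z - 1) * (z + 1) * ((z - I) * (z + I)) = 0 := by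
    linear_combination h + (1 - z ^ 2) * I_sq
  simp only [mul_eq_zero, sub_eq_zero, add_eq_zero_iff_eq_neg] at hfactor
  tauto

namespace RCLike

variable {𝕜 : Type*} [RCLike 𝕜]

theorem mul_conj_eq_one_iff (z : 𝕜) : z * conj z = 1 ↔ ‖z‖ = 1 := by
  rw [mul_conj, ← ofReal_pow, ← ofReal_one, ofReal_inj,
    pow_eq_one_iff_of_nonneg (norm_nonneg z) two_ne_zero]

end RCLike

section BracketShape

variable {𝕜 : Type*} [RCLike 𝕜]

def bracketShape (a b c : 𝕜) : Matrix (Fin 4) (Fin 4) 𝕜 :=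
  !![a, 0, 0, 0;
     0, b, c, 0;
     0, c, 0, 0;
     0, 0, 0, a]

theorem bracketShape_mul_conjTranspose_eq_one_iff (a b c : 𝕜) :
    bracketShape a b c * (bracketShape a b c)ᴴ = 1 ↔ ‖a‖ = 1 ∧ b = 0 ∧ ‖c‖ = 1 := by
  constructor
  · intro h
    have ha : a * conj a = 1 := by
      simpa [bracketShape, mul_apply, Fin.sum_univ_four] using congr_fun₂ h 0 0
    have hc : c * conj c = 1 := by
      simpa [bracketShape, mul_apply, Fin.sum_univ_four] using congr_fun₂ h 2 2
    have hbc : b * conj c = 0 := by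
      simpa [bracketShape, mul_apply, Fin.sum_univ_four] using congr_fun₂ h 1 2
    have hb : b = 0 := by linear_combination c * hbc - b * hc
    rw [RCLike.mul_conj_eq_one_iff] at ha hc
    exact ⟨ha, hb, hc⟩
  · rintro ⟨ha, rfl, hc⟩
    ext i j
    fin_cases i <;> fin_cases j <;>
      simp [bracketShape, mul_apply, Fin.sum_univ_four, (RCLike.mul_conj_eq_one_iff _).mpr, ha, hc]

end BracketShape

theorem bracket_R_unitary_iff_general (A : ℂ) :
    let R : Matrix (Fin 4) (Fin 4) ℂ :=
      !![A⁻¹, 0, 0, 0;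
         0, A⁻¹ - A ^ 3, A, 0;
         0, A, 0, 0;
         0, 0, 0, A⁻¹]
    (R * Rᴴ = 1 ↔ (A ^ 4 = 1 ∧ ‖A‖ = 1)) ∧
    (R * Rᴴ = 1 → A = 1 ∨ A = -1 ∨ A = Complex.I ∨ A = -Complex.I) := by
  intro R
  have unitary_iff : R * Rᴴ = 1 ↔ A ^ 4 = 1 ∧ ‖A‖ = 1 := by
    have hR : R = bracketShape A⁻¹ (A⁻¹ - A ^ 3) A := rfl
    rw [hR, bracketShape_mul_conjTranspose_eq_one_iff, norm_inv, inv_eq_one, sub_eq_zero]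
    have hinv_iff (hnorm : ‖A‖ = 1) : A⁻¹ = A ^ 3 ↔ A ^ 4 = 1 :=
      inv_eq_pow_iff_pow_succ_eq_one (ne_zero_of_norm_ne_zero (hnorm.symm ▸ one_ne_zero)) 3
    constructor
    · rintro ⟨hnorm, hinv, -⟩
      exact ⟨(hinv_iff hnorm).mp hinv, hnorm⟩
    · rintro ⟨hpow, hnorm⟩
      exact ⟨hnorm, (hinv_iff hnorm).mpr hpow, hnorm⟩
  exact ⟨unitary_iff, fun h => Complex.eq_one_or_neg_one_or_I_or_neg_I_of_pow_four_eq_one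
    (unitary_iff.mp h).1⟩

/-- The bracket-polynomial R-matrix is unitary iff A⁴ = 1 and |A| = 1,
in which case A = ±1 or A = ±i. -/
theorem bracket_R_unitary_iff (A : ℂ) (hA : A ≠ 0) :
    let R : Matrix (Fin 4) (Fin 4) ℂ :=
      !![A⁻¹, 0, 0, 0;
         0, A⁻¹ - A ^ 3, A, 0;
         0, A, 0, 0;
         0, 0, 0, A⁻¹]
    (R * Rᴴ = 1 ↔ (A ^ 4 = 1 ∧ ‖A‖ = 1)) ∧
    (R * Rᴴ = 1 → A = 1 ∨ A = -1 ∨ A = Complex.I ∨ A = -Complex.I) :=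
  bracket_R_unitary_iff_general A
end

section
/- A 4×4 complex matrix of the form R = [[a,0,0,0],[0,0,d,0],[0,c,0,0],[0,0,0,b]] (acting on ℂ² ⊗ ℂ² in the basis |00⟩,|01⟩,|10⟩,|11⟩) is entangling (i.e., maps some product state to a non-product state) if and only if ab ≠ cd. -/
open Matrix

/-! A state is a product state iff its determinant `s₀₀ s₁₁ - s₀₁ s₁₀` vanishes. `R` maps `s` to
`(a s₀₀, d s₁₀, c s₀₁, b s₁₁)`, whose determinant is `ab s₀₀ s₁₁ - cd s₀₁ s₁₀`; on a product state
this is `(ab - cd) s₀₁ s₁₀`, so `R` preserves product states when `ab = cd`, and otherwise maps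
the product state with all coefficients `1` to an entangled one. -/

/-- A state on ℂ² ⊗ ℂ², written as a function on pairs of basis indices,
is a product state if it factors as u ⊗ v. -/
def IsProdState (s : Fin 2 × Fin 2 → ℂ) : Prop :=
  ∃ u v : Fin 2 → ℂ, s = fun p => u p.1 * v p.2

lemma isProdState_iff (s : Fin 2 × Fin 2 → ℂ) :
    IsProdState s ↔ s (0,0) * s (1,1) = s (0,1) * s (1,0) := by
  refine ⟨fun ⟨u, v, hs⟩ => by rw [hs]; ring, fun h => ?_⟩
  by_cases h00 : s (0,0) = 0
  · rw [h00, zero_mul, eq_comm, mul_eq_zero] at h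
    rcases h with h01 | h10
    · refine ⟨![0, 1], ![s (1,0), s (1,1)], funext fun ⟨i, j⟩ => ?_⟩
      fin_cases i <;> fin_cases j <;> simp [h00, h01]
    · refine ⟨![s (0,1), s (1,1)], ![0, 1], funext fun ⟨i, j⟩ => ?_⟩
      fin_cases i <;> fin_cases j <;> simp [h00, h10]
  · refine ⟨![s (0,0), s (1,0)], ![1, s (0,1) / s (0,0)], funext fun ⟨i, j⟩ => ?_⟩
    fin_cases i <;> fin_cases j <;> simp [field]
    linear_combination h

lemma isProdState_mulVec_iff {a b c d : ℂ} {R : Matrix (Fin 2 × Fin 2) (Fin 2 × Fin 2) ℂ}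
    (hR : ∀ p q, R p q =
      if p = (0,0) ∧ q = (0,0) then a
      else if p = (0,1) ∧ q = (1,0) then d
      else if p = (1,0) ∧ q = (0,1) then c
      else if p = (1,1) ∧ q = (1,1) then b
      else 0)
    (s : Fin 2 × Fin 2 → ℂ) :
    IsProdState (R *ᵥ s) ↔ a * b * (s (0,0) * s (1,1)) = c * d * (s (0,1) * s (1,0)) := by
  have entry : ∀ p, (R *ᵥ s) p = ∑ q, R p q * s q := fun _ => rfl
  have h00 : (R *ᵥ s) (0,0) = a * s (0,0) := by simp [entry, hR]
  have h01 : (R *ᵥ s) (0,1) = d * s (1,0) := by simp [entry, hR]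
  have h10 : (R *ᵥ s) (1,0) = c * s (0,1) := by simp [entry, hR]
  have h11 : (R *ᵥ s) (1,1) = b * s (1,1) := by simp [entry, hR]
  rw [isProdState_iff, h00, h01, h10, h11]
  constructor <;> intro h <;> linear_combination h

theorem diag_antidiag_R_entangling_iff_general (a b c d : ℂ)
    (R : Matrix (Fin 2 × Fin 2) (Fin 2 × Fin 2) ℂ)
    (hR : ∀ p q, R p q =
      if p = (0,0) ∧ q = (0,0) then a
      else if p = (0,1) ∧ q = (1,0) then d
      else if p = (1,0) ∧ q = (0,1) then c
      else if p = (1,1) ∧ q = (1,1) then b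
      else 0) :
    (∃ s : Fin 2 × Fin 2 → ℂ, IsProdState s ∧ ¬ IsProdState (R.mulVec s)) ↔
      a * b ≠ c * d := by
  constructor
  · rintro ⟨s, hs, hRs⟩ hab
    rw [isProdState_iff] at hs
    exact hRs ((isProdState_mulVec_iff hR s).2 (by rw [hab, hs]))
  · intro hab
    refine ⟨1, ⟨1, 1, by funext; simp⟩, fun h => hab ?_⟩
    simpa using (isProdState_mulVec_iff hR 1).1 h

/-- The matrix R = diag-type [[a,0,0,0],[0,0,d,0],[0,c,0,0],[0,0,0,b]] with
a,b,c,d ≠ 0 is entangling iff ab ≠ cd. -/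
theorem diag_antidiag_R_entangling_iff (a b c d : ℂ)
    (ha : a ≠ 0) (hb : b ≠ 0) (hc : c ≠ 0) (hd : d ≠ 0)
    (R : Matrix (Fin 2 × Fin 2) (Fin 2 × Fin 2) ℂ)
    (hR : ∀ p q, R p q =
      if p = (0,0) ∧ q = (0,0) then a
      else if p = (0,1) ∧ q = (1,0) then d
      else if p = (1,0) ∧ q = (0,1) then c
      else if p = (1,1) ∧ q = (1,1) then b
      else 0) :
    (∃ s : Fin 2 × Fin 2 → ℂ, IsProdState s ∧ ¬ IsProdState (R.mulVec s)) ↔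
      a * b ≠ c * d :=
  diag_antidiag_R_entangling_iff_general a b c d R hR
end

section
/- Let A = e^{iθ} with θ real, and let R be the 4×4 matrix with rows [0,0,0,A], [0,A⁻¹,0,0], [0,0,A⁻¹,0], [A,0,0,0]. Applied to a product state (x|0⟩+y|1⟩)⊗(z|0⟩+w|1⟩), the result is a product state if and only if xyzw(A² − A⁻²) = 0. In particular, if sin(2θ) ≠ 0 then R is entangling. -/
/-!
The R-matrix swaps the amplitudes of |00⟩ and |11⟩ (scaling them by A) and scales those of
|01⟩ and |10⟩ by A⁻¹. Hence it multiplies the two sides of the product-state criterion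
αδ = βγ by A² and A⁻² respectively. For a product input both sides equal xyzw, so the output
is a product state iff xyzw(A² − A⁻²) = 0; and A² − A⁻² = 2i sin 2θ.
-/

open Matrix

lemma isProdState_of_forall_eq_mul {s : Fin 2 × Fin 2 → ℂ} (u v : Fin 2 → ℂ)
    (h : ∀ a b, s (a, b) = u a * v b) : IsProdState s :=
  ⟨u, v, funext fun _ => h _ _⟩

theorem isProdState_iff_mul_eq_mul (s : Fin 2 × Fin 2 → ℂ) :
    IsProdState s ↔ s (0, 0) * s (1, 1) = s (0, 1) * s (1, 0) := by
  constructor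
  · rintro ⟨u, v, rfl⟩
    ring
  intro h
  by_cases h00 : s (0, 0) = 0
  · by_cases h01 : s (0, 1) = 0
    · refine isProdState_of_forall_eq_mul ![0, 1] ![s (1, 0), s (1, 1)] ?_
      simp [Fin.forall_fin_two, h00, h01]
    · have h10 : s (1, 0) = 0 := by simpa [h00, h01] using h
      refine isProdState_of_forall_eq_mul ![s (0, 1), s (1, 1)] ![0, 1] ?_
      simp [Fin.forall_fin_two, h00, h10]
  · refine isProdState_of_forall_eq_mul ![s (0, 0), s (1, 0)] ![1, s (0, 1) / s (0, 0)] ?_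
    simp [Fin.forall_fin_two]
    exact ⟨by field_simp, by field_simp; linear_combination h⟩

noncomputable def virtualR (A : ℂ) : Matrix (Fin 2 × Fin 2) (Fin 2 × Fin 2) ℂ :=
  of fun p q =>
    if p = (0,0) ∧ q = (1,1) then A
    else if p = (1,1) ∧ q = (0,0) then A
    else if p = (0,1) ∧ q = (0,1) then A⁻¹
    else if p = (1,0) ∧ q = (1,0) then A⁻¹
    else 0

theorem virtualR_mulVec (A : ℂ) (s : Fin 2 × Fin 2 → ℂ) :
    virtualR A *ᵥ s = fun p =>
      if p.1 = p.2 then A * s (1 - p.1, 1 - p.2) else A⁻¹ * s p := by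
  ext ⟨a, b⟩
  fin_cases a <;> fin_cases b <;>
    simp [virtualR, mulVec, dotProduct, Fintype.sum_prod_type, Fin.sum_univ_two, Prod.ext_iff]

theorem isProdState_virtualR_mulVec_iff (A : ℂ) (s : Fin 2 × Fin 2 → ℂ) :
    IsProdState (virtualR A *ᵥ s) ↔
      A ^ 2 * (s (0, 0) * s (1, 1)) = A⁻¹ ^ 2 * (s (0, 1) * s (1, 0)) := by
  rw [isProdState_iff_mul_eq_mul, virtualR_mulVec]
  simp only [Fin.isValue, ↓reduceIte, sub_zero, sub_self, zero_ne_one, one_ne_zero]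
  constructor <;> intro h <;> linear_combination h

theorem isProdState_virtualR_mulVec_prod_iff (A x y z w : ℂ) :
    IsProdState (virtualR A *ᵥ fun p => (if p.1 = 0 then x else y) * (if p.2 = 0 then z else w))
      ↔ x * y * z * w * (A ^ 2 - A⁻¹ ^ 2) = 0 := by
  simp only [isProdState_virtualR_mulVec_iff, Fin.isValue, ↓reduceIte, one_ne_zero]
  constructor <;> intro h <;> linear_combination h

theorem sq_sub_inv_sq_of_eq_exp {θ : ℝ} {A : ℂ} (hA : A = Complex.exp (Complex.I * θ)) :
    A ^ 2 - A⁻¹ ^ 2 = 2 * Complex.I * Real.sin (2 * θ) := by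
  have hA2 : A ^ 2 = Complex.exp ((2 * θ : ℝ) * Complex.I) := by
    rw [hA, ← Complex.exp_nat_mul]; push_cast; ring_nf
  have hA2' : A⁻¹ ^ 2 = Complex.exp (-(2 * θ : ℝ) * Complex.I) := by
    rw [hA, ← Complex.exp_neg, ← Complex.exp_nat_mul]; push_cast; ring_nf
  rw [hA2, hA2', Complex.exp_mul_I, Complex.exp_mul_I, Complex.cos_neg, Complex.sin_neg,
    Complex.ofReal_sin]
  ring

/-- For A = e^{iθ}, the R-matrix [[0,0,0,A],[0,A⁻¹,0,0],[0,0,A⁻¹,0],[A,0,0,0]]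
applied to a product state (x|0⟩+y|1⟩)⊗(z|0⟩+w|1⟩) yields a product state iff
xyzw(A² − A⁻²) = 0; in particular if sin 2θ ≠ 0 then R is entangling. -/
theorem virtual_R_entangling (θ : ℝ) (A : ℂ) (hA : A = Complex.exp (Complex.I * θ))
    (R : Matrix (Fin 2 × Fin 2) (Fin 2 × Fin 2) ℂ)
    (hR : ∀ p q, R p q =
      if p = (0,0) ∧ q = (1,1) then A
      else if p = (1,1) ∧ q = (0,0) then A
      else if p = (0,1) ∧ q = (0,1) then A⁻¹
      else if p = (1,0) ∧ q = (1,0) then A⁻¹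
      else 0) :
    (∀ x y z w : ℂ,
      IsProdState (R.mulVec (fun p => (if p.1 = 0 then x else y) * (if p.2 = 0 then z else w)))
        ↔ x * y * z * w * (A ^ 2 - A⁻¹ ^ 2) = 0) ∧
    (Real.sin (2 * θ) ≠ 0 →
      ∃ s : Fin 2 × Fin 2 → ℂ, IsProdState s ∧ ¬ IsProdState (R.mulVec s)) := by
  obtain rfl : R = virtualR A := Matrix.ext hR
  refine ⟨isProdState_virtualR_mulVec_prod_iff A, fun hsin =>
    ⟨fun _ => 1, isProdState_of_forall_eq_mul 1 1 fun _ _ => (one_mul 1).symm, ?_⟩⟩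
  have h := isProdState_virtualR_mulVec_prod_iff A 1 1 1 1
  simp only [ite_self, mul_one, one_mul, sq_sub_inv_sq_of_eq_exp hA] at h
  rw [h]
  exact mul_ne_zero (mul_ne_zero two_ne_zero Complex.I_ne_zero) (Complex.ofReal_ne_zero.mpr hsin)
end

section
/- The matrix R with rows [0,0,0,A], [0,A⁻¹,0,0], [0,0,A⁻¹,0], [A,0,0,0] satisfies the Yang-Baxter equation (R ⊗ I)(I ⊗ R)(R ⊗ I) = (I ⊗ R)(R ⊗ I)(I ⊗ R) on (ℂ²)^{⊗3}, and is unitary whenever |A| = 1. -/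
/-!
Both `R` and its tensor products with the identity are monomial matrices: each row `p` has a
single nonzero entry, in column `σ p`. Products of monomial matrices are monomial, with the
permutations composed and the weights multiplied along the way. For `R` the permutation is
`(a, b) ↦ (1 - b, 1 - a)`, and the two sides of the braid relation give the same permutation of
`(Fin 2)³`; since the weights commute, they also give the same weights. As that permutation is an
involution, `R * Rᴴ` is diagonal with entries `|w p|² = 1` when `|A| = 1`.
-/

open Matrix Kronecker

namespace Matrix

variable {m n α : Type*} [DecidableEq n]

def monomialMatrix [Zero α] (σ : n → n) (w : n → α) : Matrix n n α :=
  of fun p q => if q = σ p then w p else 0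

theorem monomialMatrix_mul [Fintype n] [NonUnitalNonAssocSemiring α]
    (σ τ : n → n) (w v : n → α) :
    monomialMatrix σ w * monomialMatrix τ v =
      monomialMatrix (τ ∘ σ) fun p => w p * v (σ p) := by
  ext p q
  simp only [monomialMatrix, mul_apply, of_apply, ite_mul, zero_mul, mul_ite, mul_zero,
    Function.comp_apply]
  rw [Fintype.sum_eq_single (σ p) fun j hj => by simp [hj]]
  simp

theorem monomialMatrix_id_one [Zero α] [One α] :
    monomialMatrix id (fun _ : n => (1 : α)) = 1 := by
  ext p q
  simp [monomialMatrix, one_apply, eq_comm]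

theorem conjTranspose_monomialMatrix [AddMonoid α] [StarAddMonoid α] {σ : n → n}
    (hσ : Function.Involutive σ) (w : n → α) :
    (monomialMatrix σ w)ᴴ = monomialMatrix σ fun p => star (w (σ p)) := by
  ext p q
  have hpq : p = σ q ↔ q = σ p := eq_comm.trans hσ.eq_iff
  simp only [monomialMatrix, conjTranspose_apply, of_apply, hpq]
  split_ifs with h
  · rw [h]
  · exact star_zero α

theorem monomialMatrix_mul_conjTranspose [Fintype n] [Semiring α] [StarRing α] {σ : n → n}
    (hσ : Function.Involutive σ) {w : n → α} (hw : ∀ p, w p * star (w p) = 1) :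
    monomialMatrix σ w * (monomialMatrix σ w)ᴴ = 1 := by
  rw [conjTranspose_monomialMatrix hσ, monomialMatrix_mul, ← monomialMatrix_id_one]
  congr 1
  · exact funext hσ
  · funext p
    rw [hσ p, hw]

theorem monomialMatrix_kronecker_one [MulZeroOneClass α] [DecidableEq m]
    (σ : n → n) (w : n → α) :
    monomialMatrix σ w ⊗ₖ (1 : Matrix m m α) =
      monomialMatrix (Prod.map σ id) fun p => w p.1 := by
  ext ⟨p, i⟩ ⟨q, j⟩
  simp only [monomialMatrix, kroneckerMap_apply, of_apply, one_apply, eq_comm (a := i), mul_ite,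
    mul_one, mul_zero, Prod.ext_iff, Prod.map_fst, Prod.map_snd, id_eq, ite_and]
  split_ifs <;> rfl

theorem one_kronecker_monomialMatrix [MulZeroOneClass α] [DecidableEq m]
    (σ : n → n) (w : n → α) :
    (1 : Matrix m m α) ⊗ₖ monomialMatrix σ w =
      monomialMatrix (Prod.map id σ) fun p => w p.2 := by
  ext ⟨i, p⟩ ⟨j, q⟩
  simp only [monomialMatrix, kroneckerMap_apply, of_apply, one_apply, eq_comm (a := i), ite_mul,
    one_mul, zero_mul, Prod.ext_iff, Prod.map_fst, Prod.map_snd, id_eq, ite_and]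

theorem submatrix_monomialMatrix [Zero α] [DecidableEq m] (σ : n → n) (w : n → α) (e : m ≃ n) :
    (monomialMatrix σ w).submatrix e e = monomialMatrix (e.symm ∘ σ ∘ e) (w ∘ e) := by
  ext p q
  simp [monomialMatrix, Equiv.eq_symm_apply]

def onFirstTwo [MulZeroOneClass α] (R : Matrix (n × n) (n × n) α) :
    Matrix (n × n × n) (n × n × n) α :=
  (R ⊗ₖ 1).submatrix (Equiv.prodAssoc n n n).symm (Equiv.prodAssoc n n n).symm

def onLastTwo [MulZeroOneClass α] (R : Matrix (n × n) (n × n) α) :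
    Matrix (n × n × n) (n × n × n) α :=
  1 ⊗ₖ R

def IsYangBaxter [Fintype n] [NonAssocSemiring α] (R : Matrix (n × n) (n × n) α) : Prop :=
  onFirstTwo R * onLastTwo R * onFirstTwo R = onLastTwo R * onFirstTwo R * onLastTwo R

end Matrix

def virtualPerm (p : Fin 2 × Fin 2) : Fin 2 × Fin 2 := (p.2.rev, p.1.rev)

def virtualWeight {α : Type*} (a b : α) (p : Fin 2 × Fin 2) : α := if p.1 = p.2 then a else b

theorem virtualPerm_involutive : Function.Involutive virtualPerm := by
  rintro ⟨a, b⟩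
  simp [virtualPerm]

theorem isYangBaxter_virtual {α : Type*} [CommSemiring α] (a b : α) :
    IsYangBaxter (monomialMatrix virtualPerm (virtualWeight a b)) := by
  simp only [IsYangBaxter, onFirstTwo, onLastTwo, monomialMatrix_kronecker_one,
    one_kronecker_monomialMatrix, submatrix_monomialMatrix, monomialMatrix_mul]
  -- the two permutations of `(Fin 2)³` agree definitionally: both send `(i, j, k)` to
  -- `(k.rev.rev, j.rev.rev, i.rev.rev)`
  congr 1
  funext ⟨i, j, k⟩
  fin_cases i <;> fin_cases j <;> fin_cases k <;> simp [virtualWeight, virtualPerm] <;> ring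

open ComplexConjugate in
theorem virtualWeight_mul_star {A : ℂ} (hA : ‖A‖ = 1) (p : Fin 2 × Fin 2) :
    virtualWeight A A⁻¹ p * star (virtualWeight A A⁻¹ p) = 1 := by
  have h : ∀ z : ℂ, ‖z‖ = 1 → z * conj z = 1 := fun z hz => by
    rw [Complex.mul_conj', hz]
    norm_num
  unfold virtualWeight
  split_ifs
  · exact h A hA
  · exact h A⁻¹ (by rw [norm_inv, hA, inv_one])

theorem virtual_R_yang_baxter_and_unitary_general (A : ℂ)
    (R : Matrix (Fin 2 × Fin 2) (Fin 2 × Fin 2) ℂ)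
    (hR : ∀ p q, R p q =
      if p = (0,0) ∧ q = (1,1) then A
      else if p = (1,1) ∧ q = (0,0) then A
      else if p = (0,1) ∧ q = (0,1) then A⁻¹
      else if p = (1,0) ∧ q = (1,0) then A⁻¹
      else 0)
    (R12 R23 : Matrix (Fin 2 × Fin 2 × Fin 2) (Fin 2 × Fin 2 × Fin 2) ℂ)
    (hR12 : ∀ p q, R12 p q = R (p.1, p.2.1) (q.1, q.2.1) * (if p.2.2 = q.2.2 then 1 else 0))
    (hR23 : ∀ p q, R23 p q = (if p.1 = q.1 then 1 else 0) * R p.2 q.2) :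
    R12 * R23 * R12 = R23 * R12 * R23 ∧
    (‖A‖ = 1 → R * Rᴴ = 1) := by
  have hR_eq : R = monomialMatrix virtualPerm (virtualWeight A A⁻¹) := by
    ext ⟨a, b⟩ ⟨c, d⟩
    fin_cases a <;> fin_cases b <;> fin_cases c <;> fin_cases d <;>
      simp [hR, monomialMatrix, virtualPerm, virtualWeight]
  have hR12_eq : R12 = onFirstTwo R := by
    ext p q
    simp [hR12, onFirstTwo, one_apply]
  have hR23_eq : R23 = onLastTwo R := by
    ext p q
    simp [hR23, onLastTwo, one_apply]
  refine ⟨?_, fun hA => ?_⟩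
  · rw [hR12_eq, hR23_eq, hR_eq]
    exact isYangBaxter_virtual A A⁻¹
  · rw [hR_eq]
    exact monomialMatrix_mul_conjTranspose virtualPerm_involutive (virtualWeight_mul_star hA)

/-- The matrix [[0,0,0,A],[0,A⁻¹,0,0],[0,0,A⁻¹,0],[A,0,0,0]] satisfies the
Yang-Baxter equation, and is unitary whenever |A| = 1. -/
theorem virtual_R_yang_baxter_and_unitary (A : ℂ) (hA : A ≠ 0)
    (R : Matrix (Fin 2 × Fin 2) (Fin 2 × Fin 2) ℂ)
    (hR : ∀ p q, R p q =
      if p = (0,0) ∧ q = (1,1) then A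
      else if p = (1,1) ∧ q = (0,0) then A
      else if p = (0,1) ∧ q = (0,1) then A⁻¹
      else if p = (1,0) ∧ q = (1,0) then A⁻¹
      else 0)
    (R12 R23 : Matrix (Fin 2 × Fin 2 × Fin 2) (Fin 2 × Fin 2 × Fin 2) ℂ)
    (hR12 : ∀ p q, R12 p q = R (p.1, p.2.1) (q.1, q.2.1) * (if p.2.2 = q.2.2 then 1 else 0))
    (hR23 : ∀ p q, R23 p q = (if p.1 = q.1 then 1 else 0) * R p.2 q.2) :
    R12 * R23 * R12 = R23 * R12 * R23 ∧
    (‖A‖ = 1 → R * Rᴴ = 1) :=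
  virtual_R_yang_baxter_and_unitary_general A R hR R12 R23 hR12 hR23
end

section
/- Let M = [[0, iA],[−iA⁻¹, 0]] for a nonzero complex number A, and define the 4×4 matrix R by R^{ab}_{cd} = A·M^{ab}·M_{cd} + A⁻¹·δ^a_c·δ^b_d where M^{ab} = M_{ab} are the entries of M. Then R satisfies the Yang-Baxter equation, and R·R̄ = I where R̄^{ab}_{cd} = A⁻¹·M^{ab}·M_{cd} + A·δ^a_c·δ^b_d. -/
/-!
Write `E` for the rank-one matrix with entries `M_ab M_cd`, so that `R = A • E + A⁻¹ • 1` and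
`R̄ = A⁻¹ • E + A • 1`. On three tensor factors `E₁₂ = P Pᵀ` and `E₂₃ = Q Qᵀ`, where `P k = M ⊗ e_k`
and `Q k = e_k ⊗ M` insert a cup. The contractions are `PᵀP = QᵀQ = tr (M Mᵀ) • 1`,
`PᵀQ = (M M)ᵀ` and `QᵀP = M M`, so `M M = 1` yields the Temperley–Lieb relations
`Eᵢ² = δ Eᵢ`, `E₁₂ E₂₃ E₁₂ = E₁₂`, `E₂₃ E₁₂ E₂₃ = E₂₃` with loop value `δ = tr (M Mᵀ) = -A² - A⁻²`.
Kauffman's computation shows that in any algebra these relations and `δ = -A² - A⁻²` give the braid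
relation for `A • Eᵢ + A⁻¹ • 1`, and that `A⁻¹ • E + A • 1` inverts `A • E + A⁻¹ • 1`.
-/

open Matrix

namespace TemperleyLieb

variable {K α : Type*} [CommRing K] [Ring α] [Algebra K α] {δ a b : K}

theorem smul_add_smul_one_mul_mul (hab : a * b = 1) (hδ : δ = -a ^ 2 - b ^ 2) {x y : α}
    (hx : x * x = δ • x) (hxyx : x * y * x = x) :
    (a • x + b • 1) * (a • y + b • 1) * (a • x + b • 1) =
      b • (x + y) + a • (x * y + y * x) + b ^ 3 • 1 := by
  simp only [add_mul, mul_add, smul_mul_assoc, mul_smul_comm, one_mul, mul_one, smul_smul,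
    hx, hxyx]
  subst hδ
  match_scalars
  · linear_combination (b - a ^ 3 - a * b ^ 2) * hab
  · linear_combination a * hab
  · linear_combination a * hab
  · linear_combination b * hab
  · ring

theorem braid (hab : a * b = 1) (hδ : δ = -a ^ 2 - b ^ 2) {e₁ e₂ : α}
    (h₁ : e₁ * e₁ = δ • e₁) (h₂ : e₂ * e₂ = δ • e₂)
    (h₁₂₁ : e₁ * e₂ * e₁ = e₁) (h₂₁₂ : e₂ * e₁ * e₂ = e₂) :
    (a • e₁ + b • 1) * (a • e₂ + b • 1) * (a • e₁ + b • 1) =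
      (a • e₂ + b • 1) * (a • e₁ + b • 1) * (a • e₂ + b • 1) := by
  rw [smul_add_smul_one_mul_mul hab hδ h₁ h₁₂₁, smul_add_smul_one_mul_mul hab hδ h₂ h₂₁₂,
    add_comm e₂, add_comm (e₂ * e₁)]

theorem smul_add_smul_one_mul_swap (hab : a * b = 1) (hδ : δ = -a ^ 2 - b ^ 2) {e : α}
    (he : e * e = δ • e) :
    (a • e + b • 1) * (b • e + a • 1) = 1 := by
  simp only [add_mul, mul_add, smul_mul_assoc, mul_smul_comm, one_mul, mul_one, smul_smul, he]
  subst hδ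
  match_scalars
  · linear_combination -(a ^ 2 + b ^ 2) * hab
  · linear_combination hab

end TemperleyLieb

namespace Matrix

variable {l n K : Type*} [CommRing K]

theorem smul_vecMulVec_vec_transpose_add_smul_one_apply [DecidableEq n] (M : Matrix n n K)
    (a b : K) (p q : n × n) :
    (a • vecMulVec (vec Mᵀ) (vec Mᵀ) + b • 1) p q =
      a * M p.1 p.2 * M q.1 q.2 +
        b * (1 : Matrix n n K) p.1 q.1 * (1 : Matrix n n K) p.2 q.2 := by
  simp only [add_apply, smul_apply, vecMulVec_apply, vec, transpose_apply, smul_eq_mul, one_apply,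
    Prod.ext_iff, ite_and, mul_ite, mul_one, mul_zero]
  split_ifs <;> ring

variable [Fintype n]

-- `vec` stacks columns, so `vec Mᵀ (a, b) = M a b`.
theorem vecMulVec_vec_transpose_mul_self (M : Matrix n n K) :
    vecMulVec (vec Mᵀ) (vec Mᵀ) * vecMulVec (vec Mᵀ) (vec Mᵀ) =
      (M * Mᵀ).trace • vecMulVec (vec Mᵀ) (vec Mᵀ) := by
  rw [vecMulVec_mul_vecMulVec, vec_dotProduct_vec, transpose_transpose, vecMulVec_smul]

variable [Fintype l] [DecidableEq n]

theorem mul_transpose_mul_self_of_transpose_mul_self {P : Matrix l n K} {δ : K}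
    (hP : Pᵀ * P = δ • 1) : P * Pᵀ * (P * Pᵀ) = δ • (P * Pᵀ) :=
  calc P * Pᵀ * (P * Pᵀ) = P * (Pᵀ * P) * Pᵀ := by simp only [Matrix.mul_assoc]
    _ = δ • (P * Pᵀ) := by rw [hP, Matrix.mul_smul, Matrix.mul_one, Matrix.smul_mul]

theorem mul_transpose_mul_mul_transpose_mul_mul_transpose {P Q : Matrix l n K}
    (h : Pᵀ * Q * (Qᵀ * P) = 1) : P * Pᵀ * (Q * Qᵀ) * (P * Pᵀ) = P * Pᵀ :=
  calc P * Pᵀ * (Q * Qᵀ) * (P * Pᵀ) = P * (Pᵀ * Q * (Qᵀ * P)) * Pᵀ := by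
        simp only [Matrix.mul_assoc]
    _ = P * Pᵀ := by rw [h, Matrix.mul_one]

def cupLeft (M : Matrix n n K) : Matrix (n × n × n) n K :=
  of fun p k => M p.1 p.2.1 * (1 : Matrix n n K) p.2.2 k

def cupRight (M : Matrix n n K) : Matrix (n × n × n) n K :=
  of fun p k => (1 : Matrix n n K) p.1 k * M p.2.1 p.2.2

section

variable (M : Matrix n n K)

theorem cupLeft_transpose_mul_cupLeft : (cupLeft M)ᵀ * cupLeft M = (M * Mᵀ).trace • 1 := by
  ext k l
  simp [cupLeft, mul_apply, Fintype.sum_prod_type, one_apply, trace, eq_comm]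

theorem cupRight_transpose_mul_cupRight :
    (cupRight M)ᵀ * cupRight M = (M * Mᵀ).trace • 1 := by
  ext k l
  simp [cupRight, mul_apply, Fintype.sum_prod_type, one_apply, trace, eq_comm]

theorem cupLeft_transpose_mul_cupRight : (cupLeft M)ᵀ * cupRight M = (M * M)ᵀ := by
  ext k l
  simp [cupLeft, cupRight, mul_apply, Fintype.sum_prod_type, one_apply, mul_comm]

theorem cupRight_transpose_mul_cupLeft : (cupRight M)ᵀ * cupLeft M = M * M := by
  ext k l
  simp [cupLeft, cupRight, mul_apply, Fintype.sum_prod_type, one_apply, mul_comm]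

theorem smul_cupLeft_mul_transpose_add_smul_one_apply (a b : K) (p q : n × n × n) :
    (a • (cupLeft M * (cupLeft M)ᵀ) + b • 1 : Matrix (n × n × n) (n × n × n) K) p q =
      (a * M p.1 p.2.1 * M q.1 q.2.1 +
        b * (1 : Matrix n n K) p.1 q.1 * (1 : Matrix n n K) p.2.1 q.2.1) *
        (1 : Matrix n n K) p.2.2 q.2.2 := by
  simp only [cupLeft, add_apply, smul_apply, mul_apply, of_apply, transpose_apply, one_apply,
    mul_ite, ite_mul, mul_one, mul_zero, zero_mul, Finset.sum_ite_eq, Finset.mem_univ, ↓reduceIte,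
    smul_eq_mul, Prod.ext_iff, ite_and]
  split_ifs <;> ring

theorem smul_cupRight_mul_transpose_add_smul_one_apply (a b : K) (p q : n × n × n) :
    (a • (cupRight M * (cupRight M)ᵀ) + b • 1 : Matrix (n × n × n) (n × n × n) K) p q =
      (1 : Matrix n n K) p.1 q.1 *
        (a * M p.2.1 p.2.2 * M q.2.1 q.2.2 +
          b * (1 : Matrix n n K) p.2.1 q.2.1 * (1 : Matrix n n K) p.2.2 q.2.2) := by
  simp only [cupRight, add_apply, smul_apply, mul_apply, of_apply, transpose_apply, one_apply,
    mul_ite, ite_mul, one_mul, mul_one, mul_zero, zero_mul, Finset.sum_ite_eq, Finset.mem_univ,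
    ↓reduceIte, smul_eq_mul, Prod.ext_iff, ite_and]
  split_ifs <;> ring

end

theorem braid_cupLeft_cupRight {M : Matrix n n K} {a b : K} (hab : a * b = 1)
    (hM : M * M = 1) (hloop : (M * Mᵀ).trace = -a ^ 2 - b ^ 2) :
    (a • (cupLeft M * (cupLeft M)ᵀ) + b • 1) * (a • (cupRight M * (cupRight M)ᵀ) + b • 1) *
        (a • (cupLeft M * (cupLeft M)ᵀ) + b • 1) =
      (a • (cupRight M * (cupRight M)ᵀ) + b • 1) * (a • (cupLeft M * (cupLeft M)ᵀ) + b • 1) *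
        (a • (cupRight M * (cupRight M)ᵀ) + b • 1) := by
  have hzigzag : (cupLeft M)ᵀ * cupRight M * ((cupRight M)ᵀ * cupLeft M) = 1 := by
    simp [cupLeft_transpose_mul_cupRight, cupRight_transpose_mul_cupLeft, hM]
  have hzigzag' : (cupRight M)ᵀ * cupLeft M * ((cupLeft M)ᵀ * cupRight M) = 1 := by
    simp [cupLeft_transpose_mul_cupRight, cupRight_transpose_mul_cupLeft, hM]
  exact TemperleyLieb.braid hab hloop
    (mul_transpose_mul_self_of_transpose_mul_self (cupLeft_transpose_mul_cupLeft M))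
    (mul_transpose_mul_self_of_transpose_mul_self (cupRight_transpose_mul_cupRight M))
    (mul_transpose_mul_mul_transpose_mul_mul_transpose hzigzag)
    (mul_transpose_mul_mul_transpose_mul_mul_transpose hzigzag')

end Matrix

noncomputable def bracketCup (A : ℂ) : Matrix (Fin 2) (Fin 2) ℂ :=
  !![0, Complex.I * A; -Complex.I * A⁻¹, 0]

theorem bracketCup_mul_self {A : ℂ} (hA : A ≠ 0) : bracketCup A * bracketCup A = 1 := by
  ext i j
  fin_cases i <;> fin_cases j <;> simp [bracketCup, mul_apply] <;>
    linear_combination -(Complex.I ^ 2) * mul_inv_cancel₀ hA - Complex.I_sq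

theorem trace_bracketCup_mul_transpose (A : ℂ) :
    (bracketCup A * (bracketCup A)ᵀ).trace = -A ^ 2 - A⁻¹ ^ 2 := by
  simp [bracketCup, trace, vecMul, dotProduct, Fin.sum_univ_two]
  linear_combination (A ^ 2 + A⁻¹ ^ 2) * Complex.I_sq

/-- The bracket R-matrix R^{ab}_{cd} = A·M^{ab}M_{cd} + A⁻¹·δ^a_c δ^b_d with
M = [[0, iA],[−iA⁻¹, 0]] satisfies the Yang-Baxter equation, and the
contraction of R with R̄ (where R̄ swaps A and A⁻¹) is the identity. -/
theorem bracket_R_yang_baxter_and_inverse (A : ℂ) (hA : A ≠ 0)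
    (M : Matrix (Fin 2) (Fin 2) ℂ)
    (hM : M = !![0, Complex.I * A; -Complex.I * A⁻¹, 0])
    (R Rb : Matrix (Fin 2 × Fin 2) (Fin 2 × Fin 2) ℂ)
    (hR : ∀ p q, R p q =
      A * M p.1 p.2 * M q.1 q.2 +
        A⁻¹ * (if p.1 = q.1 then 1 else 0) * (if p.2 = q.2 then 1 else 0))
    (hRb : ∀ p q, Rb p q =
      A⁻¹ * M p.1 p.2 * M q.1 q.2 +
        A * (if p.1 = q.1 then 1 else 0) * (if p.2 = q.2 then 1 else 0))
    (R12 R23 : Matrix (Fin 2 × Fin 2 × Fin 2) (Fin 2 × Fin 2 × Fin 2) ℂ)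
    (hR12 : ∀ p q, R12 p q = R (p.1, p.2.1) (q.1, q.2.1) * (if p.2.2 = q.2.2 then 1 else 0))
    (hR23 : ∀ p q, R23 p q = (if p.1 = q.1 then 1 else 0) * R p.2 q.2) :
    R12 * R23 * R12 = R23 * R12 * R23 ∧ Rb * R = 1 ∧ R * Rb = 1 := by
  have hMM : M * M = 1 := hM ▸ bracketCup_mul_self hA
  have hloop : (M * Mᵀ).trace = -A ^ 2 - A⁻¹ ^ 2 := hM ▸ trace_bracketCup_mul_transpose A
  have hR' : R = A • vecMulVec (vec Mᵀ) (vec Mᵀ) + A⁻¹ • 1 := by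
    ext p q
    rw [hR, smul_vecMulVec_vec_transpose_add_smul_one_apply, one_apply, one_apply]
  have hRb' : Rb = A⁻¹ • vecMulVec (vec Mᵀ) (vec Mᵀ) + A • 1 := by
    ext p q
    rw [hRb, smul_vecMulVec_vec_transpose_add_smul_one_apply, one_apply, one_apply]
  have hR12' : R12 = A • (cupLeft M * (cupLeft M)ᵀ) + A⁻¹ • 1 := by
    ext p q
    simp only [hR12, hR, smul_cupLeft_mul_transpose_add_smul_one_apply, one_apply]
  have hR23' : R23 = A • (cupRight M * (cupRight M)ᵀ) + A⁻¹ • 1 := by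
    ext p q
    simp only [hR23, hR, smul_cupRight_mul_transpose_add_smul_one_apply, one_apply]
  have hE := vecMulVec_vec_transpose_mul_self M
  refine ⟨?_, ?_, ?_⟩
  · rw [hR12', hR23']
    exact braid_cupLeft_cupRight (mul_inv_cancel₀ hA) hMM hloop
  · rw [hRb', hR']
    exact TemperleyLieb.smul_add_smul_one_mul_swap (inv_mul_cancel₀ hA) (by rw [hloop]; ring) hE
  · rw [hRb', hR']
    exact TemperleyLieb.smul_add_smul_one_mul_swap (mul_inv_cancel₀ hA) hloop hE
end
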